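/- Let V be a real normed vector space and S ⊆ V a closed subset that is stable under addition and under multiplication by positive scalars (a closed convex cone). Let γ : ℝ → V be a C¹ curve with γ(0) ∈ S and γ'(t) ∈ S for all t. Then γ(t) ∈ S for all t ≥ 0. -/

import Mathlib

/-!
A nonempty closed convex cone `S` contains `0`, so Farkas' lemma applies: if `γ t ∉ S`, some
continuous functional `f` is nonnegative on `S` and negative at `γ t`. As `γ'` takes values in `S`,
the real function `f ∘ γ` has nonnegative derivative, hence is monotone, and
`f (γ t) ≥ f (γ 0) ≥ 0`, a contradiction.
-/

namespace ProperCone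

variable {E : Type*} [NormedAddCommGroup E] [NormedSpace ℝ E]

theorem mem_of_deriv_mem_of_le (C : ProperCone ℝ E) {γ : ℝ → E} (hγ : Differentiable ℝ γ)
    (hd : ∀ t, deriv γ t ∈ C) {s t : ℝ} (hst : s ≤ t) (hs : γ s ∈ C) : γ t ∈ C := by
  by_contra ht
  obtain ⟨f, hfC, hft⟩ := C.hyperplane_separation_point ht
  have hmono : Monotone (f ∘ γ) := by
    refine monotone_of_deriv_nonneg (f.differentiable.comp hγ) fun τ => ?_
    rw [(f.hasFDerivAt.comp_hasDerivAt τ (hγ τ).hasDerivAt).deriv]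
    exact hfC _ (hd τ)
  exact (hfC _ hs).not_gt ((hmono hst).trans_lt hft)

end ProperCone

theorem curve_stays_in_closed_cone
    (V : Type*) [NormedAddCommGroup V] [NormedSpace ℝ V]
    (S : Set V) (hS : IsClosed S)
    (hadd : ∀ s ∈ S, ∀ s' ∈ S, s + s' ∈ S)
    (hsmul : ∀ s ∈ S, ∀ c : ℝ, 0 < c → c • s ∈ S)
    (γ : ℝ → V) (hγ : ContDiff ℝ 1 γ)
    (h0 : γ 0 ∈ S) (hd : ∀ t : ℝ, deriv γ t ∈ S) :
    ∀ t : ℝ, 0 ≤ t → γ t ∈ S := by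
  let K : ConvexCone ℝ V :=
    ⟨S, fun c hc s hs => hsmul s hs c hc, fun s hs s' hs' => hadd s hs s' hs'⟩
  let C : ProperCone ℝ V := ⟨K.toPointedCone (.of_nonempty_of_isClosed ⟨γ 0, h0⟩ hS), hS⟩
  exact fun t ht => C.mem_of_deriv_mem_of_le (hγ.differentiable one_ne_zero) hd ht h0
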